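/- Let the pairs (S_{1,i},S_{2,i}), i = 1,…,n, be i.i.d. finite-valued, let M1, M2 be finite-valued random variables that are mutually independent and jointly independent of (S1^n,S2^n), and let M12 = f12(M1,S1^n) and M21 = f21(M2,M12,S2^n) for deterministic functions f12, f21. Then for every i ∈ {1,…,n}, (M2,S2^n) is conditionally independent of (M1,S1^n) given (S_{2,i}, M12, S1^{i−1}, S2_{i+1}^n, M21); that is, the Markov chain (M2,S2^n) − (S_{2,i}, M12, S1^{i−1}, S2_{i+1}^n, M21) − (M1,S1^n) holds. -/

import Mathlib

open scoped BigOperators Classical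
open Finset

namespace Paper

variable {Ω : Type} [Fintype Ω]

/-- `pr μ X a` is the probability that the random variable `X` takes the value `a`
under the pmf `μ` on the finite sample space `Ω`. -/
noncomputable def pr {A : Type} (μ : Ω → ℝ) (X : Ω → A) (a : A) : ℝ :=
  ∑ ω, if X ω = a then μ ω else 0

/-- `μ` is a probability mass function on the finite space `Ω`. -/
def IsPMF (μ : Ω → ℝ) : Prop := (∀ ω, 0 ≤ μ ω) ∧ ∑ ω, μ ω = 1

/-- Shannon entropy (in bits) of the random variable `X` under `μ`. -/
noncomputable def ent {A : Type} [Fintype A] (μ : Ω → ℝ) (X : Ω → A) : ℝ :=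
  -∑ a, pr μ X a * Real.logb 2 (pr μ X a)

/-- Mutual information `I(X;Y)` (in bits) under `μ`. -/
noncomputable def mi {A B : Type} [Fintype A] [Fintype B] (μ : Ω → ℝ)
    (X : Ω → A) (Y : Ω → B) : ℝ :=
  ent μ X + ent μ Y - ent μ (fun ω => (X ω, Y ω))

/-- Conditional mutual information `I(X;Y|Z)` (in bits) under `μ`. -/
noncomputable def cmi {A B C : Type} [Fintype A] [Fintype B] [Fintype C] (μ : Ω → ℝ)
    (X : Ω → A) (Y : Ω → B) (Z : Ω → C) : ℝ :=
  ent μ (fun ω => (X ω, Z ω)) + ent μ (fun ω => (Y ω, Z ω))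
    - ent μ (fun ω => (X ω, Y ω, Z ω)) - ent μ Z

/-- `X` and `Y` are conditionally independent given `Z` under `μ`:
`P(X = a, Y = b | Z = c) = P(X = a | Z = c) · P(Y = b | Z = c)`
whenever `P(Z = c) ≠ 0`. -/
def CondIndep {A B C : Type} (μ : Ω → ℝ) (X : Ω → A) (Y : Ω → B) (Z : Ω → C) : Prop :=
  ∀ a b c, pr μ Z c ≠ 0 →
    pr μ (fun ω => (X ω, Y ω, Z ω)) (a, b, c) * pr μ Z c
      = pr μ (fun ω => (X ω, Z ω)) (a, c) * pr μ (fun ω => (Y ω, Z ω)) (b, c)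

/-!
Write `X = (M₂, S₂ⁿ)` and `Y = (M₁, S₁ⁿ)`. The pair `(X, Y)` has law
`P(M₁ = m₁) P(M₂ = m₂) ∏ⱼ q(s₁ⱼ, s₂ⱼ)`, and the conditioning variable `Z` is a function of `(X, Y)`
whose level sets are rectangles: once `M₁₂ = c` is fixed, `M₂₁ = f₂₁(M₂, c, S₂ⁿ)` is a condition on
`X` alone, and so are `S₂ᵢ` and `S₂_{i+1}ⁿ`, while `M₁₂` and `S₁^{i−1}` are conditions on `Y` alone.
On such a level set every factor `q(s₁ⱼ, s₂ⱼ)` has one coordinate pinned (the `S₁` coordinate for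
`j < i`, the `S₂` coordinate for `j ≥ i`), so the joint law splits as `F(X) G(Y)`, which is
conditional independence given `Z`.
-/

lemma pr_eq_of_injective {A B : Type} (μ : Ω → ℝ) {V : Ω → A} {W : Ω → B} {e : B → A}
    (he : Function.Injective e) (hV : ∀ ω, V ω = e (W ω)) {a : A} {b : B} (hb : e b = a) :
    pr μ V a = pr μ W b := by
  simp only [pr, hV, ← hb, he.eq_iff]

lemma pr_triple_of_determined {A B C : Type} (μ : Ω → ℝ) (X : Ω → A) (Y : Ω → B) {Z : Ω → C}
    {h : A → B → C} (hZ : ∀ ω, Z ω = h (X ω) (Y ω)) (a : A) (b : B) (c : C) :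
    pr μ (fun ω => (X ω, Y ω, Z ω)) (a, b, c)
      = if h a b = c then pr μ (fun ω => (X ω, Y ω)) (a, b) else 0 := by
  unfold pr
  split_ifs with hc
  · refine sum_congr rfl fun ω _ => ?_
    by_cases hω : X ω = a ∧ Y ω = b
    · simp [hω.1, hω.2, hZ, hc]
    · simp only [Prod.mk.injEq] at hω ⊢
      rw [if_neg (by tauto), if_neg hω]
  · refine sum_eq_zero fun ω _ => if_neg ?_
    rintro ⟨rfl, rfl, rfl⟩
    exact hc (hZ ω).symm

lemma sum_pr_left {A B : Type} [Fintype A] (μ : Ω → ℝ) (X : Ω → A) (W : Ω → B) (w : B) :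
    ∑ a, pr μ (fun ω => (X ω, W ω)) (a, w) = pr μ W w := by
  unfold pr
  rw [sum_comm]
  refine sum_congr rfl fun ω _ => ?_
  simp [ite_and]

lemma sum_pr_middle {A B C : Type} [Fintype B] (μ : Ω → ℝ) (X : Ω → A) (Y : Ω → B) (Z : Ω → C)
    (a : A) (c : C) :
    ∑ b, pr μ (fun ω => (X ω, Y ω, Z ω)) (a, b, c) = pr μ (fun ω => (X ω, Z ω)) (a, c) := by
  unfold pr
  rw [sum_comm]
  refine sum_congr rfl fun ω _ => ?_
  by_cases hω : X ω = a ∧ Z ω = c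
  · simp [hω.1, hω.2]
  · simp only [Prod.mk.injEq] at hω ⊢
    rw [if_neg hω]
    exact sum_eq_zero fun b _ => if_neg (by tauto)

theorem condIndep_of_factorization {A B C : Type} [Fintype A] [Fintype B] (μ : Ω → ℝ)
    (X : Ω → A) (Y : Ω → B) (Z : Ω → C)
    (hfac : ∀ c, ∃ (F : A → ℝ) (G : B → ℝ),
      ∀ a b, pr μ (fun ω => (X ω, Y ω, Z ω)) (a, b, c) = F a * G b) :
    CondIndep μ X Y Z := by
  intro a b c _
  obtain ⟨F, G, hFG⟩ := hfac c
  have hXZ : pr μ (fun ω => (X ω, Z ω)) (a, c) = F a * ∑ b', G b' := by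
    rw [← sum_pr_middle μ X Y Z, mul_sum]
    exact sum_congr rfl fun b' _ => hFG a b'
  have hYZ : pr μ (fun ω => (Y ω, Z ω)) (b, c) = (∑ a', F a') * G b := by
    rw [← sum_pr_left μ X, sum_mul]
    exact sum_congr rfl fun a' _ => hFG a' b
  have hZ : pr μ Z c = (∑ a', F a') * ∑ b', G b' := by
    rw [← sum_pr_left μ Y, mul_sum]
    refine sum_congr rfl fun b' _ => ?_
    rw [← sum_pr_left μ X, sum_mul]
    exact sum_congr rfl fun a' _ => hFG a' b'
  rw [hFG, hXZ, hYZ, hZ]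
  ring

theorem _root_.Fin.prod_eq_prod_lt_mul_mul_prod_gt {M : Type*} [CommMonoid M] {n : ℕ} (i : Fin n)
    (f : Fin n → M) :
    ∏ j, f j = (∏ j : {j : Fin n // j < i}, f j) * f i * ∏ j : {j : Fin n // i < j}, f j := by
  have hlt : ∏ j : {j : Fin n // j < i}, f j = ∏ j ∈ univ.filter (· < i), f j :=
    (prod_subtype _ (fun _ => by simp) f).symm
  have hgt : ∏ j : {j : Fin n // i < j}, f j = ∏ j ∈ univ.filter (i < ·), f j :=
    (prod_subtype _ (fun _ => by simp) f).symm
  have hge : univ.filter (fun j : Fin n => ¬ j < i) = insert i (univ.filter (i < ·)) := by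
    ext j
    simp [not_lt, le_iff_lt_or_eq, or_comm, eq_comm]
  rw [hlt, hgt, ← prod_filter_mul_prod_filter_not univ (· < i) f, hge, prod_insert (by simp),
    mul_assoc]

section Separator

variable {n : ℕ} {𝒮₁ 𝒮₂ ℳ₁ ℳ₂ ℳ₁₂ ℳ₂₁ : Type}
  (f12 : ℳ₁ → (Fin n → 𝒮₁) → ℳ₁₂) (f21 : ℳ₂ → ℳ₁₂ → (Fin n → 𝒮₂) → ℳ₂₁) (i : Fin n)

/-- The conditioning variable `(S₂ᵢ, M₁₂, S₁^{i−1}, S₂_{i+1}ⁿ, M₂₁)` as a function of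
`x = (m₂, s₂ⁿ)` and `y = (m₁, s₁ⁿ)`. -/
def separator (x : ℳ₂ × (Fin n → 𝒮₂)) (y : ℳ₁ × (Fin n → 𝒮₁)) :
    𝒮₂ × ℳ₁₂ × ({j : Fin n // j < i} → 𝒮₁) × ({j : Fin n // i < j} → 𝒮₂) × ℳ₂₁ :=
  (x.2 i, f12 y.1 y.2, fun j => y.2 j, fun j => x.2 j, f21 x.1 (f12 y.1 y.2) x.2)

theorem separator_eq_iff (x : ℳ₂ × (Fin n → 𝒮₂)) (y : ℳ₁ × (Fin n → 𝒮₁)) (c₁ : 𝒮₂) (c₂ : ℳ₁₂)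
    (c₃ : {j : Fin n // j < i} → 𝒮₁) (c₄ : {j : Fin n // i < j} → 𝒮₂) (c₅ : ℳ₂₁) :
    separator f12 f21 i x y = (c₁, c₂, c₃, c₄, c₅) ↔
      (x.2 i = c₁ ∧ (∀ j : {j : Fin n // i < j}, x.2 j = c₄ j) ∧ f21 x.1 c₂ x.2 = c₅) ∧
        (f12 y.1 y.2 = c₂ ∧ ∀ j : {j : Fin n // j < i}, y.2 j = c₃ j) := by
  simp only [separator, Prod.mk.injEq, funext_iff]
  constructor
  · rintro ⟨h₁, h₂, h₃, h₄, h₅⟩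
    exact ⟨⟨h₁, h₄, h₂ ▸ h₅⟩, h₂, h₃⟩
  · rintro ⟨⟨h₁, h₄, h₅⟩, h₂, h₃⟩
    exact ⟨h₁, h₂, h₃, h₄, h₂ ▸ h₅⟩

theorem exists_factorization_on_separator_eq (p₁ : ℳ₁ → ℝ) (p₂ : ℳ₂ → ℝ) (q : 𝒮₁ × 𝒮₂ → ℝ)
    (c : 𝒮₂ × ℳ₁₂ × ({j : Fin n // j < i} → 𝒮₁) × ({j : Fin n // i < j} → 𝒮₂) × ℳ₂₁) :
    ∃ (F : ℳ₂ × (Fin n → 𝒮₂) → ℝ) (G : ℳ₁ × (Fin n → 𝒮₁) → ℝ), ∀ x y,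
      (if separator f12 f21 i x y = c then p₁ y.1 * p₂ x.1 * ∏ j, q (y.2 j, x.2 j) else 0)
        = F x * G y := by
  obtain ⟨c₁, c₂, c₃, c₄, c₅⟩ := c
  refine ⟨fun x => if x.2 i = c₁ ∧ (∀ j : {j : Fin n // i < j}, x.2 j = c₄ j) ∧
      f21 x.1 c₂ x.2 = c₅ then p₂ x.1 * ∏ j : {j : Fin n // j < i}, q (c₃ j, x.2 j) else 0,
    fun y => if f12 y.1 y.2 = c₂ ∧ ∀ j : {j : Fin n // j < i}, y.2 j = c₃ j then
      p₁ y.1 * q (y.2 i, c₁) * ∏ j : {j : Fin n // i < j}, q (y.2 j, c₄ j) else 0,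
    fun x y => ?_⟩
  simp only [ite_zero_mul_ite_zero, separator_eq_iff]
  split_ifs with hc
  · obtain ⟨⟨hx₁, hx₄, -⟩, -, hy₃⟩ := hc
    rw [Fin.prod_eq_prod_lt_mul_mul_prod_gt i]
    simp only [hx₁, hx₄, hy₃]
    ring
  · rfl

end Separator

theorem markov_chain_graphical_general
    {Ω : Type} [Fintype Ω] (μ : Ω → ℝ)
    {n : ℕ} {𝒮₁ 𝒮₂ ℳ₁ ℳ₂ ℳ₁₂ ℳ₂₁ : Type}
    [Fintype 𝒮₁] [Fintype 𝒮₂] [Fintype ℳ₁] [Fintype ℳ₂] [Fintype ℳ₁₂] [Fintype ℳ₂₁]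
    (S1 : Fin n → Ω → 𝒮₁) (S2 : Fin n → Ω → 𝒮₂) (M1 : Ω → ℳ₁) (M2 : Ω → ℳ₂)
    (q : 𝒮₁ × 𝒮₂ → ℝ)
    (hiid : ∀ s : Fin n → 𝒮₁ × 𝒮₂,
      pr μ (fun ω => fun i => (S1 i ω, S2 i ω)) s = ∏ i, q (s i))
    (hindep : ∀ (m1 : ℳ₁) (m2 : ℳ₂) (s : Fin n → 𝒮₁ × 𝒮₂),
      pr μ (fun ω => (M1 ω, M2 ω, fun i => (S1 i ω, S2 i ω))) (m1, m2, s)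
        = pr μ M1 m1 * pr μ M2 m2 * pr μ (fun ω => fun i => (S1 i ω, S2 i ω)) s)
    (f12 : ℳ₁ → (Fin n → 𝒮₁) → ℳ₁₂)
    (f21 : ℳ₂ → ℳ₁₂ → (Fin n → 𝒮₂) → ℳ₂₁)
    (M12 : Ω → ℳ₁₂) (hM12 : ∀ ω, M12 ω = f12 (M1 ω) (fun i => S1 i ω))
    (M21 : Ω → ℳ₂₁) (hM21 : ∀ ω, M21 ω = f21 (M2 ω) (M12 ω) (fun i => S2 i ω)) :
    ∀ i : Fin n,
      CondIndep μ (fun ω => (M2 ω, fun j => S2 j ω))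
        (fun ω => (M1 ω, fun j => S1 j ω))
        (fun ω => (S2 i ω, M12 ω, (fun j : {j : Fin n // j < i} => S1 j.1 ω),
          (fun j : {j : Fin n // i < j} => S2 j.1 ω), M21 ω)) := by
  intro i
  set X := fun ω => (M2 ω, fun j => S2 j ω)
  set Y := fun ω => (M1 ω, fun j => S1 j ω)
  have hswap : Function.Injective fun t : ℳ₁ × ℳ₂ × (Fin n → 𝒮₁ × 𝒮₂) =>
      ((t.2.1, fun j => (t.2.2 j).2), (t.1, fun j => (t.2.2 j).1)) := by
    rintro ⟨m₁, m₂, s⟩ ⟨m₁', m₂', s'⟩ h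
    simp only [Prod.mk.injEq, funext_iff] at h ⊢
    exact ⟨h.2.1, h.1.1, fun j => Prod.ext (h.2.2 j) (h.1.2 j)⟩
  have hlaw : ∀ x y, pr μ (fun ω => (X ω, Y ω)) (x, y)
      = pr μ M1 y.1 * pr μ M2 x.1 * ∏ j, q (y.2 j, x.2 j) := fun x y =>
    calc pr μ (fun ω => (X ω, Y ω)) (x, y)
        = pr μ (fun ω => (M1 ω, M2 ω, fun j => (S1 j ω, S2 j ω)))
            (y.1, x.1, fun j => (y.2 j, x.2 j)) :=
          pr_eq_of_injective μ hswap (fun _ => by rfl) (by rfl)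
      _ = pr μ M1 y.1 * pr μ M2 x.1 * ∏ j, q (y.2 j, x.2 j) := by rw [hindep, hiid]
  refine condIndep_of_factorization μ X Y _ fun c => ?_
  obtain ⟨F, G, hFG⟩ := exists_factorization_on_separator_eq f12 f21 i (pr μ M1) (pr μ M2) q c
  refine ⟨F, G, fun x y => ?_⟩
  rw [pr_triple_of_determined μ X Y (h := separator f12 f21 i)
    (fun ω => by simp only [separator, X, Y, hM12, hM21]), hlaw, ← hFG]
  -- the two `if`s differ only in their `Decidable` instances
  congr

/-- The Markov chain of Fig. 5 in the converse of Theorem 2: with `(S₁ᵢ,S₂ᵢ)` i.i.d.,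
`M₁,M₂` mutually independent and independent of the states, `M₁₂ = f₁₂(M₁,S₁ⁿ)` and
`M₂₁ = f₂₁(M₂,M₁₂,S₂ⁿ)`, for every `i` the chain
`(M₂,S₂ⁿ) − (S₂ᵢ, M₁₂, S₁ⁱ⁻¹, S₂ᵢ₊₁ⁿ, M₂₁) − (M₁,S₁ⁿ)` holds. -/
theorem markov_chain_graphical
    {Ω : Type} [Fintype Ω] (μ : Ω → ℝ) (hμ : IsPMF μ)
    {n : ℕ} {𝒮₁ 𝒮₂ ℳ₁ ℳ₂ ℳ₁₂ ℳ₂₁ : Type}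
    [Fintype 𝒮₁] [Fintype 𝒮₂] [Fintype ℳ₁] [Fintype ℳ₂] [Fintype ℳ₁₂] [Fintype ℳ₂₁]
    (S1 : Fin n → Ω → 𝒮₁) (S2 : Fin n → Ω → 𝒮₂) (M1 : Ω → ℳ₁) (M2 : Ω → ℳ₂)
    (q : 𝒮₁ × 𝒮₂ → ℝ) (hq : IsPMF q)
    (hiid : ∀ s : Fin n → 𝒮₁ × 𝒮₂,
      pr μ (fun ω => fun i => (S1 i ω, S2 i ω)) s = ∏ i, q (s i))
    (hindep : ∀ (m1 : ℳ₁) (m2 : ℳ₂) (s : Fin n → 𝒮₁ × 𝒮₂),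
      pr μ (fun ω => (M1 ω, M2 ω, fun i => (S1 i ω, S2 i ω))) (m1, m2, s)
        = pr μ M1 m1 * pr μ M2 m2 * pr μ (fun ω => fun i => (S1 i ω, S2 i ω)) s)
    (f12 : ℳ₁ → (Fin n → 𝒮₁) → ℳ₁₂)
    (f21 : ℳ₂ → ℳ₁₂ → (Fin n → 𝒮₂) → ℳ₂₁)
    (M12 : Ω → ℳ₁₂) (hM12 : ∀ ω, M12 ω = f12 (M1 ω) (fun i => S1 i ω))
    (M21 : Ω → ℳ₂₁) (hM21 : ∀ ω, M21 ω = f21 (M2 ω) (M12 ω) (fun i => S2 i ω)) :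
    ∀ i : Fin n,
      CondIndep μ (fun ω => (M2 ω, fun j => S2 j ω))
        (fun ω => (M1 ω, fun j => S1 j ω))
        (fun ω => (S2 i ω, M12 ω, (fun j : {j : Fin n // j < i} => S1 j.1 ω),
          (fun j : {j : Fin n // i < j} => S2 j.1 ω), M21 ω)) :=
  markov_chain_graphical_general μ S1 S2 M1 M2 q hiid hindep f12 f21 M12 hM12 M21 hM21

end Paper
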